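/- For every n ≥ 2, the Hirzebruch–Jung continued fraction [3^{n-1}, 5, 3^{n-2}, 2] (meaning n−1 threes, then 5, then n−2 threes, then 2) equals F(2n+1)²/(F(2n+1)·F(2n-1) − 1), where F denotes the odd-indexed Fibonacci numbers. -/

import Mathlib

/-!
Reading the list from the right, a block of `k` entries equal to `a` in front of a tail `l` acts on
`hj l` like the linear recurrence `u (k + 2) = a * u (k + 1) - u k`: if `hj l = u 1 / u 0` then
`hj (a^k ++ l) = u (k + 1) / u k`. Thus `[3^m, 2] = F(2m+3)/F(2m+1)`, and prepending `5` gives a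
quotient whose numerator and denominator start a second solution of the same recurrence. Writing
that solution in terms of `F`, its two terms after `n - 1` further threes are `F(2n+1)²` and, by
the Cassini-type identity `F(2k+3)² + F(2k+1)² - 3·F(2k+3)·F(2k+1) = -1`,
`F(2n+1)·F(2n-1) - 1`.
-/

/-- `oddFib n = F(2n+1)`, the odd-indexed Fibonacci numbers:
`F(1) = 1`, `F(3) = 2`, `F(2n+3) = 3·F(2n+1) − F(2n-1)`. -/
def oddFib : ℕ → ℤ
  | 0 => 1
  | 1 => 2
  | n + 2 => 3 * oddFib (n + 1) - oddFib n

/-- Hirzebruch–Jung continued fraction `[a1,...,ak] = a1 - 1/(a2 - 1/(... - 1/ak))`. -/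
def hj : List ℚ → ℚ
  | [] => 0
  | a :: l => a - 1 / hj l

theorem hj_cons (a : ℚ) (l : List ℚ) : hj (a :: l) = a - 1 / hj l := rfl

theorem hj_replicate_append {a : ℚ} {u : ℕ → ℚ} (hrec : ∀ k, u (k + 2) = a * u (k + 1) - u k)
    (hne : ∀ k, u (k + 1) ≠ 0) {l : List ℚ} (hl : hj l = u 1 / u 0) (k : ℕ) :
    hj (List.replicate k a ++ l) = u (k + 1) / u k := by
  induction k with
  | zero => simpa using hl
  | succ k ih =>
    rw [List.replicate_succ, List.cons_append, hj_cons, ih, hrec, one_div_div]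
    field_simp [hne k]

theorem pos_and_lt_succ_of_rec {R : Type*} [CommRing R] [LinearOrder R] [IsStrictOrderedRing R]
    {a : R} (ha : 2 ≤ a) {u : ℕ → R} (hrec : ∀ k, u (k + 2) = a * u (k + 1) - u k)
    (h0 : 0 < u 0) (h01 : u 0 < u 1) (k : ℕ) : 0 < u k ∧ u k < u (k + 1) := by
  induction k with
  | zero => exact ⟨h0, h01⟩
  | succ k ih =>
    obtain ⟨hpos, hlt⟩ := ih
    refine ⟨hpos.trans hlt, ?_⟩
    rw [hrec]
    linarith [mul_le_mul_of_nonneg_right ha (hpos.trans hlt).le]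

theorem oddFib_add_two (k : ℕ) : oddFib (k + 2) = 3 * oddFib (k + 1) - oddFib k := rfl

theorem oddFib_pos (k : ℕ) : 0 < oddFib k :=
  (pos_and_lt_succ_of_rec (a := (3 : ℤ)) (by norm_num) oddFib_add_two (by decide) (by decide) k).1

theorem oddFib_sq_add_sq (k : ℕ) :
    oddFib (k + 1) ^ 2 + oddFib k ^ 2 - 3 * oddFib (k + 1) * oddFib k = -1 := by
  induction k with
  | zero => rfl
  | succ k ih =>
    rw [oddFib_add_two k]
    linear_combination ih

theorem hj_replicate_three_two (m : ℕ) :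
    hj (List.replicate m 3 ++ [2]) = (oddFib (m + 1) : ℚ) / oddFib m := by
  refine hj_replicate_append (u := fun k ↦ (oddFib k : ℚ)) (fun k ↦ ?_) (fun k ↦ ?_) ?_ m
  · exact_mod_cast oddFib_add_two k
  · exact_mod_cast (oddFib_pos (k + 1)).ne'
  · norm_num [hj, oddFib]

/-- The solution of `v (k + 2) = 3 * v (k + 1) - v k` with `v 0 = F(2m+3)` and
`v 1 = 5·F(2m+3) - F(2m+1)`, i.e. `v 1 / v 0 = [5, 3^m, 2]`. -/
def fiveSeq (m k : ℕ) : ℤ :=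
  oddFib (m + 2) * oddFib (k + 1) + (oddFib (m + 1) - 2 * oddFib (m + 2)) * oddFib k

theorem fiveSeq_zero (m : ℕ) : fiveSeq m 0 = oddFib (m + 1) := by
  simp only [fiveSeq, show oddFib 1 = 2 from rfl, show oddFib 0 = 1 from rfl]
  ring

theorem fiveSeq_one (m : ℕ) : fiveSeq m 1 = 5 * oddFib (m + 1) - oddFib m := by
  simp only [fiveSeq, show oddFib 2 = 5 from rfl, show oddFib 1 = 2 from rfl, oddFib_add_two m]
  ring

theorem fiveSeq_add_two (m k : ℕ) : fiveSeq m (k + 2) = 3 * fiveSeq m (k + 1) - fiveSeq m k := by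
  simp only [fiveSeq, oddFib_add_two (k + 1), oddFib_add_two k]
  ring

theorem fiveSeq_pos (m k : ℕ) : 0 < fiveSeq m k := by
  refine (pos_and_lt_succ_of_rec (a := (3 : ℤ)) (by norm_num) (fiveSeq_add_two m) ?_ ?_ k).1
  · exact fiveSeq_zero m ▸ oddFib_pos (m + 1)
  · rw [fiveSeq_zero, fiveSeq_one]
    linarith [oddFib_add_two m, oddFib_pos (m + 1), oddFib_pos (m + 2)]

theorem fiveSeq_self_add_one (m : ℕ) :
    fiveSeq m (m + 1) = oddFib (m + 2) * oddFib (m + 1) - 1 := by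
  unfold fiveSeq
  linear_combination oddFib_sq_add_sq (m + 1)

theorem fiveSeq_self_add_two (m : ℕ) : fiveSeq m (m + 2) = oddFib (m + 2) ^ 2 := by
  unfold fiveSeq
  linear_combination oddFib (m + 2) * oddFib_add_two (m + 1)

theorem hj_replicate_three_append_five (m k : ℕ) :
    hj (List.replicate k 3 ++ 5 :: (List.replicate m 3 ++ [2])) =
      (fiveSeq m (k + 1) : ℚ) / fiveSeq m k := by
  refine hj_replicate_append (u := fun k ↦ (fiveSeq m k : ℚ)) (fun k ↦ ?_) (fun k ↦ ?_) ?_ k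
  · exact_mod_cast fiveSeq_add_two m k
  · exact_mod_cast (fiveSeq_pos m (k + 1)).ne'
  · have hF : (oddFib (m + 1) : ℚ) ≠ 0 := by exact_mod_cast (oddFib_pos (m + 1)).ne'
    rw [hj_cons, hj_replicate_three_two, fiveSeq_zero, fiveSeq_one]
    push_cast
    field_simp

theorem hj_oddFib_sq (n : ℕ) (hn : 2 ≤ n) :
    hj (List.replicate (n - 1) 3 ++ [5] ++ List.replicate (n - 2) 3 ++ [2]) =
      ((oddFib n : ℚ) ^ 2) / ((oddFib n : ℚ) * (oddFib (n - 1) : ℚ) - 1) := by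
  obtain ⟨m, rfl⟩ : ∃ m, n = m + 2 := ⟨n - 2, by omega⟩
  rw [Nat.add_sub_cancel, show m + 2 - 1 = m + 1 by omega, List.append_assoc, List.append_assoc,
    List.singleton_append, hj_replicate_three_append_five, fiveSeq_self_add_two,
    fiveSeq_self_add_one]
  push_cast
  ring
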